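/- arXiv:2310.16723 — 7 statements merged into one kernel-verified Lean document; each statement's English description precedes it below -/
import Mathlib

section
/- Let w > 0, σ ≥ 0, and let x̂(t) = x̂_e + x̂_s·sin(w t) + x̂_c·cos(w t) and û(t) = û_e + û_s·sin(w t) + û_c·cos(w t) for t ∈ ℕ. If the parameter pair ((x̂_e, x̂_s, x̂_c), (û_e, û_s, û_c)) belongs to the set C_σ, then y̲ ≤ E x̂(t) + F û(t) ≤ ȳ componentwise for all t ∈ ℕ; moreover, if σ > 0 then these inequalities hold strictly in every component for all t ∈ ℕ. -/
open Matrix Filter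

/-- Vectors in `ℝ^n`. -/
abbrev RVec (n : ℕ) := Fin n → ℝ

/-- A parameter triple `(v_e, v_s, v_c) ∈ (ℝ^m)³` of a harmonic signal. -/
abbrev HTriple (n : ℕ) := RVec n × RVec n × RVec n

/-- A parameter pair `((x̂_e, x̂_s, x̂_c), (û_e, û_s, û_c))`. -/
abbrev HParams (nx nu : ℕ) := HTriple nx × HTriple nu

/-- Value at (relative) time `k` of the harmonic signal parameterized by the triple `v`
with frequency `w`: `v_e + v_s sin(w k) + v_c cos(w k)`. -/
noncomputable def hSeq {m : ℕ} (w : ℝ) (v : HTriple m) (k : ℕ) : RVec m :=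
  v.1 + Real.sin (w * (k : ℝ)) • v.2.1 + Real.cos (w * (k : ℝ)) • v.2.2

/-- The transform `T̂_w^m` acting on parameter triples: the identity acts on `v_e` and the
rotation `T_w^m = [[cos w · I, -sin w · I], [sin w · I, cos w · I]]` acts on `(v_s, v_c)`. -/
noncomputable def hatT {m : ℕ} (w : ℝ) (v : HTriple m) : HTriple m :=
  (v.1, Real.cos w • v.2.1 - Real.sin w • v.2.2, Real.sin w • v.2.1 + Real.cos w • v.2.2)

/-- Membership in the set `D` (harmonic parameters consistent with the dynamics `x⁺ = Ax + Bu`). -/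
def inD {nx nu : ℕ} (A : Matrix (Fin nx) (Fin nx) ℝ) (B : Matrix (Fin nx) (Fin nu) ℝ)
    (w : ℝ) (p : HParams nx nu) : Prop :=
  p.1.1 = A.mulVec p.1.1 + B.mulVec p.2.1 ∧
  Real.cos w • p.1.2.1 - Real.sin w • p.1.2.2 = A.mulVec p.1.2.1 + B.mulVec p.2.2.1 ∧
  Real.sin w • p.1.2.1 + Real.cos w • p.1.2.2 = A.mulVec p.1.2.2 + B.mulVec p.2.2.2

/-- Membership in the set `C_σ` (second-order-cone conditions guaranteeing constraint
satisfaction of the harmonic signal). -/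
def inC {nx nu ny : ℕ} (E : Matrix (Fin ny) (Fin nx) ℝ) (F : Matrix (Fin ny) (Fin nu) ℝ)
    (ylo yhi : RVec ny) (σ : ℝ) (p : HParams nx nu) : Prop :=
  ∀ i : Fin ny,
    Real.sqrt ((E.mulVec p.1.2.1 + F.mulVec p.2.2.1) i ^ 2
        + (E.mulVec p.1.2.2 + F.mulVec p.2.2.2) i ^ 2)
      ≤ yhi i - σ - (E.mulVec p.1.1 + F.mulVec p.2.1) i ∧
    Real.sqrt ((E.mulVec p.1.2.1 + F.mulVec p.2.2.1) i ^ 2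
        + (E.mulVec p.1.2.2 + F.mulVec p.2.2.2) i ^ 2)
      ≤ (E.mulVec p.1.1 + F.mulVec p.2.1) i - ylo i - σ

/-- The set `D ∩ C_σ` of admissible harmonic parameters. -/
def paramSet {nx nu ny : ℕ} (A : Matrix (Fin nx) (Fin nx) ℝ) (B : Matrix (Fin nx) (Fin nu) ℝ)
    (E : Matrix (Fin ny) (Fin nx) ℝ) (F : Matrix (Fin ny) (Fin nu) ℝ)
    (ylo yhi : RVec ny) (w σ : ℝ) : Set (HParams nx nu) :=
  {p | inD A B w p ∧ inC E F ylo yhi σ p}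

/-- The quadratic form `‖v‖²_M = vᵀ M v`. -/
def quadForm {n : ℕ} (M : Matrix (Fin n) (Fin n) ℝ) (v : RVec n) : ℝ :=
  v ⬝ᵥ M.mulVec v

/-- The offset cost `V_h` with reference parameters `r` evaluated at parameters `p`. -/
def Vh {nx nu : ℕ} (Te Th : Matrix (Fin nx) (Fin nx) ℝ) (Se Sh : Matrix (Fin nu) (Fin nu) ℝ)
    (r p : HParams nx nu) : ℝ :=
  quadForm Te (p.1.1 - r.1.1) + quadForm Th (p.1.2.1 - r.1.2.1)
    + quadForm Th (p.1.2.2 - r.1.2.2)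
    + quadForm Se (p.2.1 - r.2.1) + quadForm Sh (p.2.2.1 - r.2.2.1)
    + quadForm Sh (p.2.2.2 - r.2.2.2)

/-- `p` is the unique minimizer of `f` on `S`. -/
def IsUniqueMinOn {α : Type*} (f : α → ℝ) (S : Set α) (p : α) : Prop :=
  p ∈ S ∧ ∀ q ∈ S, q ≠ p → f p < f q

/-- `(xs, us, p)` is a feasible solution of the HMPC optimization problem for the state `x`. -/
def FeasSol {nx nu ny : ℕ} (A : Matrix (Fin nx) (Fin nx) ℝ) (B : Matrix (Fin nx) (Fin nu) ℝ)
    (E : Matrix (Fin ny) (Fin nx) ℝ) (F : Matrix (Fin ny) (Fin nu) ℝ)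
    (ylo yhi : RVec ny) (w σ : ℝ) (N : ℕ) (x : RVec nx)
    (xs : ℕ → RVec nx) (us : ℕ → RVec nu) (p : HParams nx nu) : Prop :=
  xs 0 = x ∧
  (∀ k < N, xs (k + 1) = A.mulVec (xs k) + B.mulVec (us k)) ∧
  (∀ k < N, ∀ i, ylo i ≤ (E.mulVec (xs k) + F.mulVec (us k)) i
      ∧ (E.mulVec (xs k) + F.mulVec (us k)) i ≤ yhi i) ∧
  xs N = hSeq w p.1 N ∧
  inD A B w p ∧ inC E F ylo yhi σ p

/-- `x` belongs to the feasibility region of the HMPC optimization problem. -/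
def Feasible {nx nu ny : ℕ} (A : Matrix (Fin nx) (Fin nx) ℝ) (B : Matrix (Fin nx) (Fin nu) ℝ)
    (E : Matrix (Fin ny) (Fin nx) ℝ) (F : Matrix (Fin ny) (Fin nu) ℝ)
    (ylo yhi : RVec ny) (w σ : ℝ) (N : ℕ) (x : RVec nx) : Prop :=
  ∃ xs us p, FeasSol A B E F ylo yhi w σ N x xs us p

/-- The HMPC cost `J` of a solution `(xs, us, p)` with reference parameters `r`. -/
noncomputable def Jcost {nx nu : ℕ} (Q Te Th : Matrix (Fin nx) (Fin nx) ℝ)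
    (R Se Sh : Matrix (Fin nu) (Fin nu) ℝ) (w : ℝ) (N : ℕ) (r : HParams nx nu)
    (xs : ℕ → RVec nx) (us : ℕ → RVec nu) (p : HParams nx nu) : ℝ :=
  (∑ k ∈ Finset.range N,
      (quadForm Q (xs k - hSeq w p.1 k) + quadForm R (us k - hSeq w p.2 k)))
    + Vh Te Th Se Sh r p

/-- `(xs, us, p)` is an optimal solution of the HMPC optimization problem for state `x` and
reference parameters `r`. -/
noncomputable def OptSol {nx nu ny : ℕ} (A : Matrix (Fin nx) (Fin nx) ℝ)
    (B : Matrix (Fin nx) (Fin nu) ℝ)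
    (E : Matrix (Fin ny) (Fin nx) ℝ) (F : Matrix (Fin ny) (Fin nu) ℝ)
    (ylo yhi : RVec ny) (Q Te Th : Matrix (Fin nx) (Fin nx) ℝ)
    (R Se Sh : Matrix (Fin nu) (Fin nu) ℝ) (w σ : ℝ) (N : ℕ) (r : HParams nx nu)
    (x : RVec nx) (xs : ℕ → RVec nx) (us : ℕ → RVec nu) (p : HParams nx nu) : Prop :=
  FeasSol A B E F ylo yhi w σ N x xs us p ∧
  ∀ xs' us' p', FeasSol A B E F ylo yhi w σ N x xs' us' p' →
    Jcost Q Te Th R Se Sh w N r xs us p ≤ Jcost Q Te Th R Se Sh w N r xs' us' p'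

/-- The optimal value `H*(x; r)` of the HMPC optimization problem. -/
noncomputable def Hstar {nx nu ny : ℕ} (A : Matrix (Fin nx) (Fin nx) ℝ)
    (B : Matrix (Fin nx) (Fin nu) ℝ)
    (E : Matrix (Fin ny) (Fin nx) ℝ) (F : Matrix (Fin ny) (Fin nu) ℝ)
    (ylo yhi : RVec ny) (Q Te Th : Matrix (Fin nx) (Fin nx) ℝ)
    (R Se Sh : Matrix (Fin nu) (Fin nu) ℝ) (w σ : ℝ) (N : ℕ) (r : HParams nx nu)
    (x : RVec nx) : ℝ :=
  sInf {J : ℝ | ∃ xs us p, FeasSol A B E F ylo yhi w σ N x xs us p ∧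
    J = Jcost Q Te Th R Se Sh w N r xs us p}

/-- The controllability matrix `[B, AB, …, A^{ν−1}B]` of the pair `(A, B)`. -/
def ctrbMat {nx nu : ℕ} (A : Matrix (Fin nx) (Fin nx) ℝ) (B : Matrix (Fin nx) (Fin nu) ℝ)
    (ν : ℕ) : Matrix (Fin nx) (Fin ν × Fin nu) ℝ :=
  Matrix.of fun i q => ((A ^ (q.1 : ℕ)) * B) i q.2

/-- Squared Euclidean norm of a vector. -/
def nsq {n : ℕ} (v : RVec n) : ℝ := ∑ i, v i ^ 2

/-- Squared Euclidean norm of a parameter pair. -/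
def pNsq {nx nu : ℕ} (p : HParams nx nu) : ℝ :=
  nsq p.1.1 + nsq p.1.2.1 + nsq p.1.2.2 + nsq p.2.1 + nsq p.2.2.1 + nsq p.2.2.2

/-- `f` is `μ`-strongly convex on the parameter space:
`f z − f y ≥ ⟨∇f(y), z − y⟩ + (μ/2)‖z − y‖²` for all `z, y`. -/
def StrConvVh {nx nu : ℕ} (μ : ℝ) (f : HParams nx nu → ℝ) : Prop :=
  ∀ z y : HParams nx nu, f z - f y ≥ (fderiv ℝ f y) (z - y) + μ / 2 * pNsq (z - y)

/-- The rotation matrix `T_w^m = [[cos w · I, −sin w · I], [sin w · I, cos w · I]] ∈ ℝ^{2m×2m}`. -/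
noncomputable def TwMat (m : ℕ) (w : ℝ) : Matrix (Fin m ⊕ Fin m) (Fin m ⊕ Fin m) ℝ :=
  Matrix.fromBlocks (Real.cos w • (1 : Matrix (Fin m) (Fin m) ℝ))
    (-(Real.sin w • (1 : Matrix (Fin m) (Fin m) ℝ)))
    (Real.sin w • (1 : Matrix (Fin m) (Fin m) ℝ))
    (Real.cos w • (1 : Matrix (Fin m) (Fin m) ℝ))

/-- The matrix `T̂_w^m = diag(I_m, T_w^m) ∈ ℝ^{3m×3m}`. -/
noncomputable def ThatMat (m : ℕ) (w : ℝ) :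
    Matrix (Fin m ⊕ (Fin m ⊕ Fin m)) (Fin m ⊕ (Fin m ⊕ Fin m)) ℝ :=
  Matrix.fromBlocks (1 : Matrix (Fin m) (Fin m) ℝ) 0 0 (TwMat m w)

lemma sincos_abs_le (θ a b : ℝ) :
    |Real.sin θ * a + Real.cos θ * b| ≤ Real.sqrt (a ^ 2 + b ^ 2) := by
  have h : (Real.sin θ * a + Real.cos θ * b) ^ 2 ≤ a ^ 2 + b ^ 2 := by
    nlinarith [Real.sin_sq_add_cos_sq θ, sq_nonneg (Real.sin θ * b - Real.cos θ * a)]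
  calc |Real.sin θ * a + Real.cos θ * b|
      = Real.sqrt ((Real.sin θ * a + Real.cos θ * b) ^ 2) := (Real.sqrt_sq_eq_abs _).symm
    _ ≤ Real.sqrt (a ^ 2 + b ^ 2) := Real.sqrt_le_sqrt h

/-- if the harmonic parameters belong to `C_σ`, the harmonic signals satisfy
the constraints `y̲ ≤ E x̂(t) + F û(t) ≤ ȳ` for all `t`, strictly whenever `σ > 0`. -/
theorem statement1 {nx nu ny : ℕ}
    (E : Matrix (Fin ny) (Fin nx) ℝ) (F : Matrix (Fin ny) (Fin nu) ℝ)
    (ylo yhi : RVec ny) (hy : ∀ i, ylo i < yhi i)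
    (w σ : ℝ) (hw : 0 < w) (hσ : 0 ≤ σ)
    (xh : HTriple nx) (uh : HTriple nu)
    (hC : inC E F ylo yhi σ (xh, uh)) :
    (∀ t : ℕ, ∀ i, ylo i ≤ (E.mulVec (hSeq w xh t) + F.mulVec (hSeq w uh t)) i ∧
        (E.mulVec (hSeq w xh t) + F.mulVec (hSeq w uh t)) i ≤ yhi i) ∧
    (0 < σ → ∀ t : ℕ, ∀ i, ylo i < (E.mulVec (hSeq w xh t) + F.mulVec (hSeq w uh t)) i ∧
        (E.mulVec (hSeq w xh t) + F.mulVec (hSeq w uh t)) i < yhi i) := by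
  have key : ∀ t : ℕ, ∀ i,
      ylo i + σ ≤ (E.mulVec (hSeq w xh t) + F.mulVec (hSeq w uh t)) i ∧
      (E.mulVec (hSeq w xh t) + F.mulVec (hSeq w uh t)) i ≤ yhi i - σ := by
    intro t i
    obtain ⟨h1, h2⟩ := hC i
    set θ := w * (t : ℝ)
    have hval : (E.mulVec (hSeq w xh t) + F.mulVec (hSeq w uh t)) i
        = (E.mulVec xh.1 + F.mulVec uh.1) i
          + (Real.sin θ * (E.mulVec xh.2.1 + F.mulVec uh.2.1) i
            + Real.cos θ * (E.mulVec xh.2.2 + F.mulVec uh.2.2) i) := by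
      simp [hSeq, Matrix.mulVec_add, Matrix.mulVec_smul, θ]
      ring
    have habs := sincos_abs_le θ ((E.mulVec xh.2.1 + F.mulVec uh.2.1) i)
      ((E.mulVec xh.2.2 + F.mulVec uh.2.2) i)
    rw [hval]
    rw [abs_le] at habs
    constructor <;> simp only [] at h1 h2 <;> linarith [habs.1, habs.2]
  refine ⟨fun t i => ⟨by linarith [(key t i).1], by linarith [(key t i).2]⟩,
    fun hσ' t i => ⟨by linarith [(key t i).1], by linarith [(key t i).2]⟩⟩
end

section
/- Let w > 0, σ ≥ 0, and let x̂(t) = x̂_e + x̂_s·sin(w t) + x̂_c·cos(w t) and û(t) = û_e + û_s·sin(w t) + û_c·cos(w t) for t ∈ ℕ. If the parameter pair ((x̂_e, x̂_s, x̂_c), (û_e, û_s, û_c)) belongs to D ∩ C_σ, then the harmonic signals (x̂(t), û(t)) are admissible, i.e., x̂(t+1) = A x̂(t) + B û(t) and y̲ ≤ E x̂(t) + F û(t) ≤ ȳ componentwise for all t ∈ ℕ; if moreover σ > 0, the constraint inequalities hold strictly in every component for all t ∈ ℕ. -/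
open Matrix Filter

/-- parameters in `D ∩ C_σ` yield admissible harmonic signals: the dynamics
hold and the constraints are satisfied for all `t`, strictly whenever `σ > 0`. -/
theorem statement2 {nx nu ny : ℕ}
    (A : Matrix (Fin nx) (Fin nx) ℝ) (B : Matrix (Fin nx) (Fin nu) ℝ)
    (E : Matrix (Fin ny) (Fin nx) ℝ) (F : Matrix (Fin ny) (Fin nu) ℝ)
    (ylo yhi : RVec ny) (hy : ∀ i, ylo i < yhi i)
    (w σ : ℝ) (hw : 0 < w) (hσ : 0 ≤ σ)
    (xh : HTriple nx) (uh : HTriple nu)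
    (hDC : (xh, uh) ∈ paramSet A B E F ylo yhi w σ) :
    (∀ t : ℕ, hSeq w xh (t + 1) = A.mulVec (hSeq w xh t) + B.mulVec (hSeq w uh t)) ∧
    (∀ t : ℕ, ∀ i, ylo i ≤ (E.mulVec (hSeq w xh t) + F.mulVec (hSeq w uh t)) i ∧
        (E.mulVec (hSeq w xh t) + F.mulVec (hSeq w uh t)) i ≤ yhi i) ∧
    (0 < σ → ∀ t : ℕ, ∀ i, ylo i < (E.mulVec (hSeq w xh t) + F.mulVec (hSeq w uh t)) i ∧
        (E.mulVec (hSeq w xh t) + F.mulVec (hSeq w uh t)) i < yhi i) := by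
  obtain ⟨⟨hD1, hD2, hD3⟩, hC⟩ := hDC
  have key : ∀ t : ℕ, ∀ i : Fin ny,
      ylo i + σ ≤ (E.mulVec (hSeq w xh t) + F.mulVec (hSeq w uh t)) i ∧
      (E.mulVec (hSeq w xh t) + F.mulVec (hSeq w uh t)) i ≤ yhi i - σ := by
    intro t i
    obtain ⟨h1, h2⟩ := hC i
    set a := (E.mulVec xh.2.1 + F.mulVec uh.2.1) i with ha
    set b := (E.mulVec xh.2.2 + F.mulVec uh.2.2) i with hb
    set ye := (E.mulVec xh.1 + F.mulVec uh.1) i with hye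
    set s := Real.sin (w * (t : ℝ)) with hs
    set c := Real.cos (w * (t : ℝ)) with hc
    have hpyth : s ^ 2 + c ^ 2 = 1 := Real.sin_sq_add_cos_sq _
    have hval : (E.mulVec (hSeq w xh t) + F.mulVec (hSeq w uh t)) i
        = ye + s * a + c * b := by
      simp only [hSeq, Matrix.mulVec_add, Matrix.mulVec_smul, Pi.add_apply,
        Pi.smul_apply, smul_eq_mul, ha, hb, hye]
      ring
    have habs : |s * a + c * b| ≤ Real.sqrt (a ^ 2 + b ^ 2) := by
      rw [← Real.sqrt_sq_eq_abs]
      apply Real.sqrt_le_sqrt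
      nlinarith [sq_nonneg (c * a - s * b)]
    have habs' := abs_le.mp habs
    constructor
    · rw [hval]; linarith [habs'.1]
    · rw [hval]; linarith [habs'.2]
  refine ⟨?_, ?_, ?_⟩
  · intro t
    have hsin : Real.sin (w * ((t : ℕ) + 1 : ℕ)) =
        Real.sin (w * (t : ℝ)) * Real.cos w + Real.cos (w * (t : ℝ)) * Real.sin w := by
      push_cast
      rw [mul_add, mul_one, Real.sin_add]
    have hcos : Real.cos (w * ((t : ℕ) + 1 : ℕ)) =
        Real.cos (w * (t : ℝ)) * Real.cos w - Real.sin (w * (t : ℝ)) * Real.sin w := by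
      push_cast
      rw [mul_add, mul_one, Real.cos_add]
    funext i
    have e1 := congrFun hD1 i
    have e2 := congrFun hD2 i
    have e3 := congrFun hD3 i
    simp only [hSeq, Matrix.mulVec_add, Matrix.mulVec_smul, Pi.add_apply, Pi.sub_apply,
      Pi.smul_apply, smul_eq_mul] at e1 e2 e3 ⊢
    rw [hsin, hcos]
    set s := Real.sin (w * (t : ℝ))
    set c := Real.cos (w * (t : ℝ))
    linear_combination e1 + s * e2 + c * e3
  · intro t i
    obtain ⟨hl, hr⟩ := key t i
    exact ⟨by linarith, by linarith⟩
  · intro hσ' t i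
    obtain ⟨hl, hr⟩ := key t i
    exact ⟨by linarith, by linarith⟩
end

section
/- Let w > 0. For any artificial-reference parameters (x̂, û) = ((x̂_e, x̂_s, x̂_c), (û_e, û_s, û_c)) ∈ (ℝ^{n_x})³ × (ℝ^{n_u})³ and any reference parameters (r_x, r_u) = ((x_re, x_rs, x_rc), (u_re, u_rs, u_rc)), the offset cost is invariant under the simultaneous transform: V_h evaluated at parameters (T̂_w^{n_x} x̂, T̂_w^{n_u} û) with reference (T̂_w^{n_x} r_x, T̂_w^{n_u} r_u) equals V_h evaluated at (x̂, û) with reference (r_x, r_u). -/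
open Matrix Filter

/-- the offset cost `V_h` is invariant under simultaneously transforming the
artificial-reference parameters and the reference parameters by `T̂_w`. -/
theorem statement6 {nx nu : ℕ} (w : ℝ) (hw : 0 < w)
    (Te Th : Matrix (Fin nx) (Fin nx) ℝ) (Se Sh : Matrix (Fin nu) (Fin nu) ℝ)
    (hTe : Te.PosDef) (hSe : Se.PosDef)
    (hTh : Th.PosDef) (hThd : Th.IsDiag) (hSh : Sh.PosDef) (hShd : Sh.IsDiag)
    (r p : HParams nx nu) :
    Vh Te Th Se Sh (hatT w r.1, hatT w r.2) (hatT w p.1, hatT w p.2)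
      = Vh Te Th Se Sh r p := by
  have key : ∀ {n : ℕ} (M : Matrix (Fin n) (Fin n) ℝ), M.IsDiag →
      ∀ a b : RVec n,
        quadForm M (Real.cos w • a - Real.sin w • b)
          + quadForm M (Real.sin w • a + Real.cos w • b)
        = quadForm M a + quadForm M b := by
    intro n M hM a b
    have diag : ∀ v : RVec n, quadForm M v = ∑ i, M i i * v i ^ 2 := by
      intro v
      unfold quadForm Matrix.mulVec dotProduct
      refine Finset.sum_congr rfl fun i _ => ?_
      show v i * (∑ j, M i j * v j) = _
      rw [Finset.sum_eq_single i]
      · ring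
      · intro j _ hj; rw [hM (Ne.symm hj)]; ring
      · intro h; exact absurd (Finset.mem_univ i) h
    simp only [diag, ← Finset.sum_add_distrib]
    refine Finset.sum_congr rfl fun i _ => ?_
    have h := Real.sin_sq_add_cos_sq w
    simp only [Pi.sub_apply, Pi.add_apply, Pi.smul_apply, smul_eq_mul]
    linear_combination M i i * (a i ^ 2 + b i ^ 2) * h
  have hx := key Th hThd (p.1.2.1 - r.1.2.1) (p.1.2.2 - r.1.2.2)
  have hu := key Sh hShd (p.2.2.1 - r.2.2.1) (p.2.2.2 - r.2.2.2)
  unfold Vh hatT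
  simp only
  have e1 : Real.cos w • p.1.2.1 - Real.sin w • p.1.2.2
      - (Real.cos w • r.1.2.1 - Real.sin w • r.1.2.2)
      = Real.cos w • (p.1.2.1 - r.1.2.1) - Real.sin w • (p.1.2.2 - r.1.2.2) := by
    simp [smul_sub]; abel
  have e2 : Real.sin w • p.1.2.1 + Real.cos w • p.1.2.2
      - (Real.sin w • r.1.2.1 + Real.cos w • r.1.2.2)
      = Real.sin w • (p.1.2.1 - r.1.2.1) + Real.cos w • (p.1.2.2 - r.1.2.2) := by
    simp [smul_sub]; abel
  have e3 : Real.cos w • p.2.2.1 - Real.sin w • p.2.2.2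
      - (Real.cos w • r.2.2.1 - Real.sin w • r.2.2.2)
      = Real.cos w • (p.2.2.1 - r.2.2.1) - Real.sin w • (p.2.2.2 - r.2.2.2) := by
    simp [smul_sub]; abel
  have e4 : Real.sin w • p.2.2.1 + Real.cos w • p.2.2.2
      - (Real.sin w • r.2.2.1 + Real.cos w • r.2.2.2)
      = Real.sin w • (p.2.2.1 - r.2.2.1) + Real.cos w • (p.2.2.2 - r.2.2.2) := by
    simp [smul_sub]; abel
  rw [e1, e2, e3, e4]
  linarith
end

section
/- Let w > 0 and σ ≥ 0. For any parameter pair (x̂, û) = ((x̂_e, x̂_s, x̂_c), (û_e, û_s, û_c)) ∈ (ℝ^{n_x})³ × (ℝ^{n_u})³, we have (T̂_w^{n_x} x̂, T̂_w^{n_u} û) ∈ C_σ if and only if (x̂, û) ∈ C_σ. -/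
open Matrix Filter

/-- the set `C_σ` is closed under the transform `(T̂_w^{n_x}, T̂_w^{n_u})`:
`(T̂_w x̂, T̂_w û) ∈ C_σ ↔ (x̂, û) ∈ C_σ`. -/
theorem statement8 {nx nu ny : ℕ}
    (E : Matrix (Fin ny) (Fin nx) ℝ) (F : Matrix (Fin ny) (Fin nu) ℝ)
    (ylo yhi : RVec ny) (hy : ∀ i, ylo i < yhi i)
    (w σ : ℝ) (hw : 0 < w) (hσ : 0 ≤ σ) (p : HParams nx nu) :
    inC E F ylo yhi σ (hatT w p.1, hatT w p.2) ↔ inC E F ylo yhi σ p := by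
  unfold inC hatT
  refine forall_congr' fun i => ?_
  set a := (E.mulVec p.1.2.1 + F.mulVec p.2.2.1) i with ha
  set b := (E.mulVec p.1.2.2 + F.mulVec p.2.2.2) i with hb
  have h1 : (E.mulVec (Real.cos w • p.1.2.1 - Real.sin w • p.1.2.2)
      + F.mulVec (Real.cos w • p.2.2.1 - Real.sin w • p.2.2.2)) i
      = Real.cos w * a - Real.sin w * b := by
    simp [Matrix.mulVec_sub, Matrix.mulVec_smul, ha, hb]; ring
  have h2 : (E.mulVec (Real.sin w • p.1.2.1 + Real.cos w • p.1.2.2)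
      + F.mulVec (Real.sin w • p.2.2.1 + Real.cos w • p.2.2.2)) i
      = Real.sin w * a + Real.cos w * b := by
    simp [Matrix.mulVec_add, Matrix.mulVec_smul, ha, hb]; ring
  have key : (Real.cos w * a - Real.sin w * b) ^ 2 + (Real.sin w * a + Real.cos w * b) ^ 2
      = a ^ 2 + b ^ 2 := by nlinarith [Real.sin_sq_add_cos_sq w]
  simp only [h1, h2, key]
end

section
/- Let w > 0, σ ≥ 0, and assume D ∩ C_σ is nonempty. For reference parameters (r_x, r_u), let (x̊, ů) denote the unique minimizer of the offset cost V_h (with reference (r_x, r_u)) over D ∩ C_σ, and let (x̊⁺, ů⁺) denote the unique minimizer of V_h with the transformed reference (T̂_w^{n_x} r_x, T̂_w^{n_u} r_u) over D ∩ C_σ. Then x̊⁺ = T̂_w^{n_x} x̊ and ů⁺ = T̂_w^{n_u} ů. -/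
open Matrix Filter

section Aux

open Real

lemma hatT_hatT_neg {m : ℕ} (θ : ℝ) (v : HTriple m) : hatT θ (hatT (-θ) v) = v := by
  have h := Real.sin_sq_add_cos_sq θ
  simp only [hatT, Real.cos_neg, Real.sin_neg, neg_smul]
  refine Prod.ext rfl (Prod.ext ?_ ?_) <;> funext i <;>
    simp only [Pi.add_apply, Pi.sub_apply, Pi.smul_apply, Pi.neg_apply, smul_eq_mul]
  · linear_combination v.2.1 i * h
  · linear_combination v.2.2 i * h

lemma quad_rot {n : ℕ} (M : Matrix (Fin n) (Fin n) ℝ) (c s : ℝ) (h : c ^ 2 + s ^ 2 = 1)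
    (a b : RVec n) :
    quadForm M (c • a - s • b) + quadForm M (s • a + c • b)
      = quadForm M a + quadForm M b := by
  simp only [quadForm, Matrix.mulVec_add, Matrix.mulVec_sub, Matrix.mulVec_smul,
    sub_dotProduct, add_dotProduct, dotProduct_sub, dotProduct_add, smul_dotProduct,
    dotProduct_smul, smul_eq_mul]
  linear_combination (a ⬝ᵥ M.mulVec a + b ⬝ᵥ M.mulVec b) * h

lemma inD_hatT {nx nu : ℕ} (A : Matrix (Fin nx) (Fin nx) ℝ) (B : Matrix (Fin nx) (Fin nu) ℝ)
    (w θ : ℝ) (p : HParams nx nu) (hD : inD A B w p) :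
    inD A B w (hatT θ p.1, hatT θ p.2) := by
  obtain ⟨h1, h2, h3⟩ := hD
  refine ⟨h1, ?_, ?_⟩ <;>
  · simp only [hatT, Matrix.mulVec_add, Matrix.mulVec_sub, Matrix.mulVec_smul]
    rw [show A.mulVec p.1.2.1 = (A.mulVec p.1.2.1 + B.mulVec p.2.2.1) - B.mulVec p.2.2.1 by abel,
      ← h2,
      show A.mulVec p.1.2.2 = (A.mulVec p.1.2.2 + B.mulVec p.2.2.2) - B.mulVec p.2.2.2 by abel,
      ← h3]
    module

lemma inC_hatT {nx nu ny : ℕ} (E : Matrix (Fin ny) (Fin nx) ℝ) (F : Matrix (Fin ny) (Fin nu) ℝ)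
    (ylo yhi : RVec ny) (σ θ : ℝ) (p : HParams nx nu) (hC : inC E F ylo yhi σ p) :
    inC E F ylo yhi σ (hatT θ p.1, hatT θ p.2) := by
  intro i
  have h := Real.sin_sq_add_cos_sq θ
  obtain ⟨hC1, hC2⟩ := hC i
  have e1 : (E.mulVec (hatT θ p.1).2.1 + F.mulVec (hatT θ p.2).2.1) i
      = Real.cos θ * (E.mulVec p.1.2.1 + F.mulVec p.2.2.1) i
        - Real.sin θ * (E.mulVec p.1.2.2 + F.mulVec p.2.2.2) i := by
    simp only [hatT, Matrix.mulVec_add, Matrix.mulVec_sub, Matrix.mulVec_smul,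
      Pi.add_apply, Pi.sub_apply, Pi.smul_apply, smul_eq_mul]
    ring
  have e2 : (E.mulVec (hatT θ p.1).2.2 + F.mulVec (hatT θ p.2).2.2) i
      = Real.sin θ * (E.mulVec p.1.2.1 + F.mulVec p.2.2.1) i
        + Real.cos θ * (E.mulVec p.1.2.2 + F.mulVec p.2.2.2) i := by
    simp only [hatT, Matrix.mulVec_add, Matrix.mulVec_sub, Matrix.mulVec_smul,
      Pi.add_apply, Pi.sub_apply, Pi.smul_apply, smul_eq_mul]
    ring
  have e0 : (E.mulVec (hatT θ p.1).1 + F.mulVec (hatT θ p.2).1) i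
      = (E.mulVec p.1.1 + F.mulVec p.2.1) i := rfl
  rw [e0, e1, e2]
  have key : (Real.cos θ * (E.mulVec p.1.2.1 + F.mulVec p.2.2.1) i
        - Real.sin θ * (E.mulVec p.1.2.2 + F.mulVec p.2.2.2) i) ^ 2
      + (Real.sin θ * (E.mulVec p.1.2.1 + F.mulVec p.2.2.1) i
        + Real.cos θ * (E.mulVec p.1.2.2 + F.mulVec p.2.2.2) i) ^ 2
      = (E.mulVec p.1.2.1 + F.mulVec p.2.2.1) i ^ 2
        + (E.mulVec p.1.2.2 + F.mulVec p.2.2.2) i ^ 2 := by nlinarith [h]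
  rw [key]
  exact ⟨hC1, hC2⟩

lemma mem_paramSet_hatT {nx nu ny : ℕ} (A : Matrix (Fin nx) (Fin nx) ℝ)
    (B : Matrix (Fin nx) (Fin nu) ℝ) (E : Matrix (Fin ny) (Fin nx) ℝ)
    (F : Matrix (Fin ny) (Fin nu) ℝ) (ylo yhi : RVec ny) (w σ θ : ℝ)
    (p : HParams nx nu) (hp : p ∈ paramSet A B E F ylo yhi w σ) :
    (hatT θ p.1, hatT θ p.2) ∈ paramSet A B E F ylo yhi w σ :=
  ⟨inD_hatT A B w θ p hp.1, inC_hatT E F ylo yhi σ θ p hp.2⟩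

lemma Vh_hatT {nx nu : ℕ} (Te Th : Matrix (Fin nx) (Fin nx) ℝ)
    (Se Sh : Matrix (Fin nu) (Fin nu) ℝ) (θ : ℝ) (r p : HParams nx nu) :
    Vh Te Th Se Sh (hatT θ r.1, hatT θ r.2) (hatT θ p.1, hatT θ p.2)
      = Vh Te Th Se Sh r p := by
  have h := Real.sin_sq_add_cos_sq θ
  have h' : Real.cos θ ^ 2 + Real.sin θ ^ 2 = 1 := by linarith
  have hx := quad_rot Th (Real.cos θ) (Real.sin θ) h' (p.1.2.1 - r.1.2.1) (p.1.2.2 - r.1.2.2)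
  have hu := quad_rot Sh (Real.cos θ) (Real.sin θ) h' (p.2.2.1 - r.2.2.1) (p.2.2.2 - r.2.2.2)
  simp only [Vh, hatT]
  rw [show (Real.cos θ • p.1.2.1 - Real.sin θ • p.1.2.2)
      - (Real.cos θ • r.1.2.1 - Real.sin θ • r.1.2.2)
      = Real.cos θ • (p.1.2.1 - r.1.2.1) - Real.sin θ • (p.1.2.2 - r.1.2.2) by module,
    show (Real.sin θ • p.1.2.1 + Real.cos θ • p.1.2.2)
      - (Real.sin θ • r.1.2.1 + Real.cos θ • r.1.2.2)
      = Real.sin θ • (p.1.2.1 - r.1.2.1) + Real.cos θ • (p.1.2.2 - r.1.2.2) by module,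
    show (Real.cos θ • p.2.2.1 - Real.sin θ • p.2.2.2)
      - (Real.cos θ • r.2.2.1 - Real.sin θ • r.2.2.2)
      = Real.cos θ • (p.2.2.1 - r.2.2.1) - Real.sin θ • (p.2.2.2 - r.2.2.2) by module,
    show (Real.sin θ • p.2.2.1 + Real.cos θ • p.2.2.2)
      - (Real.sin θ • r.2.2.1 + Real.cos θ • r.2.2.2)
      = Real.sin θ • (p.2.2.1 - r.2.2.1) + Real.cos θ • (p.2.2.2 - r.2.2.2) by module]
  linarith [hx, hu]

end Aux

/-- the unique minimizer of `V_h` over `D ∩ C_σ` for the transformed reference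
`(T̂_w r_x, T̂_w r_u)` is the transform of the unique minimizer for the reference `(r_x, r_u)`. -/
theorem statement9 {nx nu ny : ℕ}
    (A : Matrix (Fin nx) (Fin nx) ℝ) (B : Matrix (Fin nx) (Fin nu) ℝ)
    (E : Matrix (Fin ny) (Fin nx) ℝ) (F : Matrix (Fin ny) (Fin nu) ℝ)
    (ylo yhi : RVec ny) (hy : ∀ i, ylo i < yhi i)
    (w σ : ℝ) (hw : 0 < w) (hσ : 0 ≤ σ)
    (Te Th : Matrix (Fin nx) (Fin nx) ℝ) (Se Sh : Matrix (Fin nu) (Fin nu) ℝ)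
    (hTe : Te.PosDef) (hSe : Se.PosDef)
    (hTh : Th.PosDef) (hThd : Th.IsDiag) (hSh : Sh.PosDef) (hShd : Sh.IsDiag)
    (hne : (paramSet A B E F ylo yhi w σ).Nonempty)
    (r rmin rminPlus : HParams nx nu)
    (h1 : IsUniqueMinOn (Vh Te Th Se Sh r) (paramSet A B E F ylo yhi w σ) rmin)
    (h2 : IsUniqueMinOn (Vh Te Th Se Sh (hatT w r.1, hatT w r.2))
      (paramSet A B E F ylo yhi w σ) rminPlus) :
    rminPlus = (hatT w rmin.1, hatT w rmin.2) := by
  have hΦΨ : ∀ q : HParams nx nu, (hatT w (hatT (-w) q.1), hatT w (hatT (-w) q.2)) = q :=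
    fun q => Prod.ext (hatT_hatT_neg w q.1) (hatT_hatT_neg w q.2)
  have hΨΦ : ∀ q : HParams nx nu, (hatT (-w) (hatT w q.1), hatT (-w) (hatT w q.2)) = q := by
    intro q
    have h1 := hatT_hatT_neg (-w) q.1
    have h2 := hatT_hatT_neg (-w) q.2
    rw [neg_neg] at h1 h2
    exact Prod.ext h1 h2
  set S := paramSet A B E F ylo yhi w σ with hS
  have hmem : ((hatT w rmin.1, hatT w rmin.2) : HParams nx nu) ∈ S :=
    mem_paramSet_hatT A B E F ylo yhi w σ w rmin h1.1
  by_contra hne'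
  have hlt1 : Vh Te Th Se Sh (hatT w r.1, hatT w r.2) rminPlus
      < Vh Te Th Se Sh (hatT w r.1, hatT w r.2) (hatT w rmin.1, hatT w rmin.2) :=
    h2.2 _ hmem (fun e => hne' e.symm)
  -- the pull-back of rminPlus
  have hmem2 : ((hatT (-w) rminPlus.1, hatT (-w) rminPlus.2) : HParams nx nu) ∈ S :=
    mem_paramSet_hatT A B E F ylo yhi w σ (-w) rminPlus h2.1
  have hne2 : ((hatT (-w) rminPlus.1, hatT (-w) rminPlus.2) : HParams nx nu) ≠ rmin := by
    intro e
    apply hne'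
    have h := hΦΨ rminPlus
    rw [show hatT (-w) rminPlus.1 = rmin.1 from congrArg Prod.fst e,
      show hatT (-w) rminPlus.2 = rmin.2 from congrArg Prod.snd e] at h
    exact h.symm
  have hlt2 : Vh Te Th Se Sh r rmin
      < Vh Te Th Se Sh r (hatT (-w) rminPlus.1, hatT (-w) rminPlus.2) :=
    h1.2 _ hmem2 hne2
  have hv1 : Vh Te Th Se Sh (hatT w r.1, hatT w r.2) (hatT w rmin.1, hatT w rmin.2)
      = Vh Te Th Se Sh r rmin := Vh_hatT Te Th Se Sh w r rmin
  have hv2 : Vh Te Th Se Sh (hatT w r.1, hatT w r.2) rminPlus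
      = Vh Te Th Se Sh r (hatT (-w) rminPlus.1, hatT (-w) rminPlus.2) := by
    have h := Vh_hatT Te Th Se Sh w r (hatT (-w) rminPlus.1, hatT (-w) rminPlus.2)
    simp only at h
    rw [hatT_hatT_neg w rminPlus.1, hatT_hatT_neg w rminPlus.2] at h
    exact h
  linarith
end

section
/- Let w > 0, σ ≥ 0, assume D ∩ C_σ is nonempty, and let the reference parameters evolve as r_x(t) = (T̂_w^{n_x})^t r_x(0) and r_u(t) = (T̂_w^{n_u})^t r_u(0) for t ∈ ℕ. Let (x̊(t), ů(t)) denote the unique minimizer of V_h with reference (r_x(t), r_u(t)) over D ∩ C_σ, and write x̊(t) = (x̊_e(t), x̊_s(t), x̊_c(t)). Then x̊(t) = (T̂_w^{n_x})^t x̊(0) and ů(t) = (T̂_w^{n_u})^t ů(0) for all t ∈ ℕ; consequently, the trajectory x̊_e(t) + x̊_c(t) equals x̊_e(0) + x̊_s(0)·sin(w t) + x̊_c(0)·cos(w t) for all t ∈ ℕ, i.e., the optimal artificial harmonic references at subsequent times define a single harmonic trajectory parameterized by (x̊(0), ů(0)). -/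
open Matrix Filter

/-! The rotation `T̂_θ` acts on the parameters of a harmonic signal as a time shift by `θ / w`,
it commutes with the linear maps `(x, u) ↦ A x + B u` applied componentwise, and it preserves
the amplitudes `√(y_s² + y_c²)` and the weighted cost `V_h` (the weights of the `s` and `c`
parts agree). Hence `D ∩ C_σ` and `V_h` are invariant under rotating parameters and reference
together, so the unique minimizer for the rotated reference is the rotated minimizer. -/

lemma hatT_hatT {m : ℕ} (a b : ℝ) (v : HTriple m) :
    hatT a (hatT b v) = hatT (a + b) v := by
  simp only [hatT, Prod.mk.injEq, true_and]
  constructor <;>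
  · funext i
    simp only [Pi.add_apply, Pi.sub_apply, Pi.smul_apply, smul_eq_mul,
      Real.cos_add, Real.sin_add]
    ring

lemma hatT_comm {m : ℕ} (a b : ℝ) (v : HTriple m) :
    hatT a (hatT b v) = hatT b (hatT a v) := by
  rw [hatT_hatT, hatT_hatT, add_comm]

lemma hatT_zero {m : ℕ} (v : HTriple m) : hatT 0 v = v := by
  simp [hatT]

lemma iterate_hatT {m : ℕ} (w : ℝ) (t : ℕ) : (hatT (m := m) w)^[t] = hatT (w * t) := by
  induction t with
  | zero => funext v; simp [hatT_zero]
  | succ t ih =>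
    funext v
    rw [Function.iterate_succ_apply', ih, hatT_hatT]
    congr 1
    push_cast
    ring

lemma hatT_sub {m : ℕ} (θ : ℝ) (v u : HTriple m) :
    hatT θ v - hatT θ u = hatT θ (v - u) := by
  simp only [hatT, Prod.mk_sub_mk, Prod.fst_sub, Prod.snd_sub, Prod.mk.injEq, true_and]
  constructor <;> module

lemma hatT_sq_add_sq {m : ℕ} (θ : ℝ) (v : HTriple m) (i : Fin m) :
    (hatT θ v).2.1 i ^ 2 + (hatT θ v).2.2 i ^ 2 = v.2.1 i ^ 2 + v.2.2 i ^ 2 := by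
  simp only [hatT, Pi.add_apply, Pi.sub_apply, Pi.smul_apply, smul_eq_mul]
  linear_combination (v.2.1 i ^ 2 + v.2.2 i ^ 2) * Real.sin_sq_add_cos_sq θ

lemma hSeq_eq_hatT {m : ℕ} (w : ℝ) (v : HTriple m) (t : ℕ) :
    hSeq w v t = (hatT (w * t) v).1 + (hatT (w * t) v).2.2 := by
  rw [hSeq, hatT, add_assoc]

noncomputable def rotParams (nx nu : ℕ) (θ : ℝ) : HParams nx nu ≃ HParams nx nu where
  toFun p := (hatT θ p.1, hatT θ p.2)
  invFun p := (hatT (-θ) p.1, hatT (-θ) p.2)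
  left_inv p := by simp [hatT_hatT, hatT_zero]
  right_inv p := by simp [hatT_hatT, hatT_zero]

@[simp]
lemma rotParams_apply {nx nu : ℕ} (θ : ℝ) (p : HParams nx nu) :
    rotParams nx nu θ p = (hatT θ p.1, hatT θ p.2) := rfl

def linTriple {k nx nu : ℕ} (A : Matrix (Fin k) (Fin nx) ℝ) (B : Matrix (Fin k) (Fin nu) ℝ)
    (p : HParams nx nu) : HTriple k :=
  (A *ᵥ p.1.1 + B *ᵥ p.2.1, A *ᵥ p.1.2.1 + B *ᵥ p.2.2.1, A *ᵥ p.1.2.2 + B *ᵥ p.2.2.2)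

lemma linTriple_rotParams {k nx nu : ℕ} (A : Matrix (Fin k) (Fin nx) ℝ)
    (B : Matrix (Fin k) (Fin nu) ℝ) (θ : ℝ) (p : HParams nx nu) :
    linTriple A B (rotParams nx nu θ p) = hatT θ (linTriple A B p) := by
  simp only [linTriple, rotParams_apply, hatT, mulVec_add, mulVec_sub, mulVec_smul,
    Prod.mk.injEq, true_and]
  constructor <;> module

lemma inD_iff {nx nu : ℕ} (A : Matrix (Fin nx) (Fin nx) ℝ) (B : Matrix (Fin nx) (Fin nu) ℝ)
    (w : ℝ) (p : HParams nx nu) : inD A B w p ↔ hatT w p.1 = linTriple A B p := by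
  simp only [inD, hatT, linTriple, Prod.mk.injEq]

lemma inD_rotParams {nx nu : ℕ} (A : Matrix (Fin nx) (Fin nx) ℝ)
    (B : Matrix (Fin nx) (Fin nu) ℝ) (w θ : ℝ) {p : HParams nx nu} (h : inD A B w p) :
    inD A B w (rotParams nx nu θ p) := by
  rw [inD_iff] at h ⊢
  rw [linTriple_rotParams, ← h, rotParams_apply, hatT_comm]

lemma inC_rotParams {nx nu ny : ℕ} (E : Matrix (Fin ny) (Fin nx) ℝ)
    (F : Matrix (Fin ny) (Fin nu) ℝ) (ylo yhi : RVec ny) (σ θ : ℝ) {p : HParams nx nu}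
    (h : inC E F ylo yhi σ p) : inC E F ylo yhi σ (rotParams nx nu θ p) := by
  intro i
  have hy := linTriple_rotParams E F θ p
  change √((linTriple E F _).2.1 i ^ 2 + (linTriple E F _).2.2 i ^ 2)
      ≤ yhi i - σ - (linTriple E F _).1 i ∧
    √((linTriple E F _).2.1 i ^ 2 + (linTriple E F _).2.2 i ^ 2)
      ≤ (linTriple E F _).1 i - ylo i - σ
  rw [hy, hatT_sq_add_sq]
  exact h i

lemma rotParams_mem_paramSet {nx nu ny : ℕ} (A : Matrix (Fin nx) (Fin nx) ℝ)
    (B : Matrix (Fin nx) (Fin nu) ℝ) (E : Matrix (Fin ny) (Fin nx) ℝ)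
    (F : Matrix (Fin ny) (Fin nu) ℝ) (ylo yhi : RVec ny) (w σ θ : ℝ) {p : HParams nx nu} :
    rotParams nx nu θ p ∈ paramSet A B E F ylo yhi w σ ↔ p ∈ paramSet A B E F ylo yhi w σ := by
  refine ⟨fun h => ?_, fun h => ⟨inD_rotParams A B w θ h.1, inC_rotParams E F ylo yhi σ θ h.2⟩⟩
  rw [← (rotParams nx nu θ).symm_apply_apply p]
  exact ⟨inD_rotParams A B w (-θ) h.1, inC_rotParams E F ylo yhi σ (-θ) h.2⟩

def tripleCost {m : ℕ} (M N : Matrix (Fin m) (Fin m) ℝ) (v : HTriple m) : ℝ :=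
  quadForm M v.1 + quadForm N v.2.1 + quadForm N v.2.2

lemma tripleCost_hatT {m : ℕ} (M N : Matrix (Fin m) (Fin m) ℝ) (θ : ℝ) (v : HTriple m) :
    tripleCost M N (hatT θ v) = tripleCost M N v := by
  simp only [tripleCost, hatT, quadForm, mulVec_add, mulVec_sub, mulVec_smul,
    dotProduct_add, dotProduct_sub, add_dotProduct, sub_dotProduct,
    smul_dotProduct, dotProduct_smul, smul_eq_mul]
  linear_combination (v.2.1 ⬝ᵥ N *ᵥ v.2.1 + v.2.2 ⬝ᵥ N *ᵥ v.2.2) * Real.sin_sq_add_cos_sq θ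

lemma Vh_eq_tripleCost {nx nu : ℕ} (Te Th : Matrix (Fin nx) (Fin nx) ℝ)
    (Se Sh : Matrix (Fin nu) (Fin nu) ℝ) (r p : HParams nx nu) :
    Vh Te Th Se Sh r p = tripleCost Te Th (p.1 - r.1) + tripleCost Se Sh (p.2 - r.2) := by
  simp only [Vh, tripleCost, Prod.fst_sub, Prod.snd_sub]
  ring

lemma Vh_rotParams {nx nu : ℕ} (Te Th : Matrix (Fin nx) (Fin nx) ℝ)
    (Se Sh : Matrix (Fin nu) (Fin nu) ℝ) (θ : ℝ) (r p : HParams nx nu) :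
    Vh Te Th Se Sh (rotParams nx nu θ r) (rotParams nx nu θ p) = Vh Te Th Se Sh r p := by
  simp only [Vh_eq_tripleCost, rotParams_apply, hatT_sub, tripleCost_hatT]

namespace IsUniqueMinOn

variable {α β : Type*} {f : β → ℝ} {g : α → ℝ} {S : Set α} {T : Set β} {p q : α}

lemma eq (hp : IsUniqueMinOn g S p) (hq : IsUniqueMinOn g S q) : p = q := by
  by_contra hne
  exact lt_asymm (hp.2 q hq.1 (Ne.symm hne)) (hq.2 p hp.1 hne)

lemma map_equiv (e : α ≃ β) (hST : ∀ a, e a ∈ T ↔ a ∈ S) (hfg : ∀ a, f (e a) = g a)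
    (h : IsUniqueMinOn g S p) : IsUniqueMinOn f T (e p) := by
  refine ⟨(hST p).2 h.1, fun b hb hne => ?_⟩
  rw [← e.apply_symm_apply b] at hb hne ⊢
  rw [hfg, hfg]
  exact h.2 _ ((hST _).1 hb) (fun hp => hne (congrArg e hp))

end IsUniqueMinOn

theorem statement10_general {nx nu ny : ℕ}
    (A : Matrix (Fin nx) (Fin nx) ℝ) (B : Matrix (Fin nx) (Fin nu) ℝ)
    (E : Matrix (Fin ny) (Fin nx) ℝ) (F : Matrix (Fin ny) (Fin nu) ℝ)
    (ylo yhi : RVec ny)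
    (w σ : ℝ)
    (Te Th : Matrix (Fin nx) (Fin nx) ℝ) (Se Sh : Matrix (Fin nu) (Fin nu) ℝ)
    (r : ℕ → HParams nx nu)
    (hr : ∀ t, r t = ((hatT w)^[t] (r 0).1, (hatT w)^[t] (r 0).2))
    (rmin : ℕ → HParams nx nu)
    (hmin : ∀ t, IsUniqueMinOn (Vh Te Th Se Sh (r t))
      (paramSet A B E F ylo yhi w σ) (rmin t)) :
    (∀ t, rmin t = ((hatT w)^[t] (rmin 0).1, (hatT w)^[t] (rmin 0).2)) ∧
    (∀ t : ℕ, (rmin t).1.1 + (rmin t).1.2.2 = hSeq w (rmin 0).1 t) := by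
  simp only [iterate_hatT] at hr ⊢
  have hrot : ∀ t : ℕ, rmin t = rotParams nx nu (w * t) (rmin 0) := fun t =>
    (hmin t).eq <| (hmin 0).map_equiv _ (fun _ => rotParams_mem_paramSet ..)
      (fun p => by rw [hr t]; exact Vh_rotParams Te Th Se Sh _ (r 0) p)
  refine ⟨hrot, fun t => ?_⟩
  rw [hSeq_eq_hatT, hrot t, rotParams_apply]

/-- when the reference parameters evolve by `T̂_w`, the unique minimizers of
`V_h` over `D ∩ C_σ` also evolve by `T̂_w`, so the optimal artificial harmonic references at
subsequent times define a single harmonic trajectory parameterized by the minimizer at `t = 0`. -/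
theorem statement10 {nx nu ny : ℕ}
    (A : Matrix (Fin nx) (Fin nx) ℝ) (B : Matrix (Fin nx) (Fin nu) ℝ)
    (E : Matrix (Fin ny) (Fin nx) ℝ) (F : Matrix (Fin ny) (Fin nu) ℝ)
    (ylo yhi : RVec ny) (hy : ∀ i, ylo i < yhi i)
    (w σ : ℝ) (hw : 0 < w) (hσ : 0 ≤ σ)
    (Te Th : Matrix (Fin nx) (Fin nx) ℝ) (Se Sh : Matrix (Fin nu) (Fin nu) ℝ)
    (hTe : Te.PosDef) (hSe : Se.PosDef)
    (hTh : Th.PosDef) (hThd : Th.IsDiag) (hSh : Sh.PosDef) (hShd : Sh.IsDiag)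
    (hne : (paramSet A B E F ylo yhi w σ).Nonempty)
    (r : ℕ → HParams nx nu)
    (hr : ∀ t, r t = ((hatT w)^[t] (r 0).1, (hatT w)^[t] (r 0).2))
    (rmin : ℕ → HParams nx nu)
    (hmin : ∀ t, IsUniqueMinOn (Vh Te Th Se Sh (r t))
      (paramSet A B E F ylo yhi w σ) (rmin t)) :
    (∀ t, rmin t = ((hatT w)^[t] (rmin 0).1, (hatT w)^[t] (rmin 0).2)) ∧
    (∀ t : ℕ, (rmin t).1.1 + (rmin t).1.2.2 = hSeq w (rmin 0).1 t) :=
  statement10_general A B E F ylo yhi w σ Te Th Se Sh r hr rmin hmin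
end

section
/- Let w > 0, σ > 0, assume the pair (A, B) is controllable and the prediction horizon N is greater than or equal to the controllability index of (A, B), and assume D ∩ C_σ is nonempty. Let x ∈ ℝ^{n_x} belong to the feasibility region of HMPC, let (x*, u*, x̂*, û*) with x̂* = (x̂_e*, x̂_s*, x̂_c*) be an optimal solution of the HMPC optimization problem for state x and reference parameters (r_x, r_u), and let (x̊, ů) with x̊ = (x̊_e, x̊_s, x̊_c) be the unique minimizer of V_h over D ∩ C_σ. Then x = x̂_e* + x̂_c* if and only if x = x̊_e + x̊_c. -/
/-!
Both sides of the equivalence amount to `p = rmin`. Since the tracking cost is nonnegative,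
`J ≥ V_h`, with equality along the harmonic trajectory of any parameter in `D ∩ C_σ`; so if
`x = rmin_e + rmin_c`, optimality gives `V_h(p) ≤ V_h(rmin)`.

Conversely, let `x = p_e + p_c` and suppose `V_h(rmin) < V_h(p)`. Move the parameters to
`p + t (rmin - p)` and add to the harmonic trajectory of `p` the response, scaled by `t`, to an
input sequence steering `0` to the terminal mismatch, which exists because `N` is at least the
controllability index. The margin `σ` built into `C_σ` keeps this candidate feasible for small
`t > 0`, its tracking cost is `O(t²)`, and by convexity `V_h` decreases by at least
`t (V_h(p) - V_h(rmin))`, contradicting optimality.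
-/

open Matrix Filter

section QuadForm

variable {n : ℕ} {M : Matrix (Fin n) (Fin n) ℝ}

lemma quadForm_nonneg (hM : M.PosSemidef) (v : RVec n) : 0 ≤ quadForm M v := by
  simpa [quadForm] using hM.dotProduct_mulVec_nonneg v

lemma quadForm_smul (M : Matrix (Fin n) (Fin n) ℝ) (t : ℝ) (v : RVec n) :
    quadForm M (t • v) = t ^ 2 * quadForm M v := by
  simp only [quadForm, mulVec_smul, smul_dotProduct, dotProduct_smul, smul_eq_mul]
  ring

lemma convexOn_quadForm_sub (hM : M.PosSemidef) (c : RVec n) :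
    ConvexOn ℝ Set.univ fun v => quadForm M (v - c) := by
  refine ⟨convex_univ, fun u _ v _ a b ha hb hab => ?_⟩
  obtain rfl : b = 1 - a := by linarith
  have hdefect : a • quadForm M (u - c) + (1 - a) • quadForm M (v - c)
      - quadForm M (a • u + (1 - a) • v - c) = a * (1 - a) * quadForm M (u - v) := by
    simp only [quadForm, mulVec_sub, mulVec_add, mulVec_smul, dotProduct_sub, sub_dotProduct,
      dotProduct_add, add_dotProduct, dotProduct_smul, smul_dotProduct, smul_eq_mul]
    ring
  nlinarith [quadForm_nonneg hM (u - v), mul_nonneg ha hb]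

end QuadForm

lemma convexOn_Vh {nx nu : ℕ} {Te Th : Matrix (Fin nx) (Fin nx) ℝ}
    {Se Sh : Matrix (Fin nu) (Fin nu) ℝ} (hTe : Te.PosSemidef) (hTh : Th.PosSemidef)
    (hSe : Se.PosSemidef) (hSh : Sh.PosSemidef) (r : HParams nx nu) :
    ConvexOn ℝ Set.univ (Vh Te Th Se Sh r) := by
  have hterm {n : ℕ} {M : Matrix (Fin n) (Fin n) ℝ} (hM : M.PosSemidef) (c : RVec n)
      (π : HParams nx nu →ₗ[ℝ] RVec n) : ConvexOn ℝ Set.univ fun p => quadForm M (π p - c) :=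
    (convexOn_quadForm_sub hM c).comp_linearMap π
  exact (((((hterm hTe r.1.1 (LinearMap.fst ℝ _ _ ∘ₗ LinearMap.fst ℝ _ _)).add
    (hterm hTh r.1.2.1 (LinearMap.fst ℝ _ _ ∘ₗ LinearMap.snd ℝ _ _ ∘ₗ LinearMap.fst ℝ _ _))).add
    (hterm hTh r.1.2.2 (LinearMap.snd ℝ _ _ ∘ₗ LinearMap.snd ℝ _ _ ∘ₗ LinearMap.fst ℝ _ _))).add
    (hterm hSe r.2.1 (LinearMap.fst ℝ _ _ ∘ₗ LinearMap.snd ℝ _ _))).add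
    (hterm hSh r.2.2.1 (LinearMap.fst ℝ _ _ ∘ₗ LinearMap.snd ℝ _ _ ∘ₗ LinearMap.snd ℝ _ _))).add
    (hterm hSh r.2.2.2 (LinearMap.snd ℝ _ _ ∘ₗ LinearMap.snd ℝ _ _ ∘ₗ LinearMap.snd ℝ _ _))

lemma sqrt_sq_add_sq_combo_le {a b : ℝ} (ha : 0 ≤ a) (hb : 0 ≤ b) (s c s' c' : ℝ) :
    √((a * s + b * s') ^ 2 + (a * c + b * c') ^ 2)
      ≤ a * √(s ^ 2 + c ^ 2) + b * √(s' ^ 2 + c' ^ 2) := by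
  have h := norm_add_le (a • (⟨s, c⟩ : ℂ)) (b • ⟨s', c'⟩)
  simpa [Complex.norm_eq_sqrt_sq_add_sq, norm_smul, abs_of_nonneg ha, abs_of_nonneg hb] using h

lemma abs_sin_mul_add_cos_mul_le (θ a b : ℝ) :
    |Real.sin θ * a + Real.cos θ * b| ≤ √(a ^ 2 + b ^ 2) :=
  Real.abs_le_sqrt <| by
    nlinarith [Real.sin_sq_add_cos_sq θ, sq_nonneg (Real.cos θ * a - Real.sin θ * b)]

section Harmonic

variable {m : ℕ} (w : ℝ)

@[simp] lemma hSeq_zero (v : HTriple m) : hSeq w v 0 = v.1 + v.2.2 := by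
  simp [hSeq]

lemma hSeq_add (a b : HTriple m) (k : ℕ) : hSeq w (a + b) k = hSeq w a k + hSeq w b k := by
  simp only [hSeq, Prod.fst_add, Prod.snd_add]
  module

lemma hSeq_smul (t : ℝ) (a : HTriple m) (k : ℕ) : hSeq w (t • a) k = t • hSeq w a k := by
  simp only [hSeq, Prod.smul_fst, Prod.smul_snd]
  module

end Harmonic

section Reachability

variable {nx nu : ℕ} (A : Matrix (Fin nx) (Fin nx) ℝ) (B : Matrix (Fin nx) (Fin nu) ℝ)

def zeroStateResponse : ℕ → (ℕ → RVec nu) →ₗ[ℝ] RVec nx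
  | 0 => 0
  | k + 1 => A.mulVecLin ∘ₗ zeroStateResponse k + B.mulVecLin ∘ₗ LinearMap.proj k

@[simp] lemma zeroStateResponse_zero (v : ℕ → RVec nu) : zeroStateResponse A B 0 v = 0 := rfl

lemma zeroStateResponse_succ (k : ℕ) (v : ℕ → RVec nu) :
    zeroStateResponse A B (k + 1) v = A *ᵥ zeroStateResponse A B k v + B *ᵥ v k := rfl

lemma zeroStateResponse_single_of_le {k m : ℕ} (hk : k ≤ m) (u : RVec nu) :
    zeroStateResponse A B k (Pi.single m u) = 0 := by
  induction k with
  | zero => rfl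
  | succ k ih =>
    rw [zeroStateResponse_succ, ih (by omega), Pi.single_eq_of_ne (by omega)]
    simp

lemma zeroStateResponse_single_add (m i : ℕ) (u : RVec nu) :
    zeroStateResponse A B (m + 1 + i) (Pi.single m u) = (A ^ i * B) *ᵥ u := by
  induction i with
  | zero =>
    rw [add_zero, zeroStateResponse_succ, zeroStateResponse_single_of_le A B le_rfl]
    simp
  | succ i ih =>
    rw [← add_assoc, zeroStateResponse_succ, ih, Pi.single_eq_of_ne (by omega), pow_succ',
      Matrix.mul_assoc, ← mulVec_mulVec]
    simp

lemma range_zeroStateResponse_eq_top {ν N : ℕ} (hν : ν ≤ N) (hrank : (ctrbMat A B ν).rank = nx) :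
    LinearMap.range (zeroStateResponse A B N) = ⊤ := by
  have hctrb : LinearMap.range (ctrbMat A B ν).mulVecLin = ⊤ :=
    Submodule.eq_top_of_finrank_eq (by simpa [Matrix.rank] using hrank)
  rw [eq_top_iff, ← hctrb, range_mulVecLin, Submodule.span_le]
  rintro _ ⟨⟨j, l⟩, rfl⟩
  obtain ⟨m, rfl⟩ : ∃ m, N = m + 1 + j := ⟨N - 1 - j, by omega⟩
  refine ⟨Pi.single m (Pi.single l 1), ?_⟩
  rw [zeroStateResponse_single_add, mulVec_single_one]
  rfl

end Reachability

section HMPC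

open Topology

variable {nx nu ny : ℕ} {A : Matrix (Fin nx) (Fin nx) ℝ} {B : Matrix (Fin nx) (Fin nu) ℝ}
  {E : Matrix (Fin ny) (Fin nx) ℝ} {F : Matrix (Fin ny) (Fin nu) ℝ} {ylo yhi : RVec ny}
  {w σ : ℝ} {N : ℕ} {Q Te Th : Matrix (Fin nx) (Fin nx) ℝ} {R Se Sh : Matrix (Fin nu) (Fin nu) ℝ}

/-- The output parameters `(ŷ_e, ŷ_s, ŷ_c)`. -/
def outputParams (E : Matrix (Fin ny) (Fin nx) ℝ) (F : Matrix (Fin ny) (Fin nu) ℝ)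
    (p : HParams nx nu) : HTriple ny :=
  (E *ᵥ p.1.1 + F *ᵥ p.2.1, E *ᵥ p.1.2.1 + F *ᵥ p.2.2.1, E *ᵥ p.1.2.2 + F *ᵥ p.2.2.2)

lemma outputParams_add_smul (a b : ℝ) (p q : HParams nx nu) :
    outputParams E F (a • p + b • q) = a • outputParams E F p + b • outputParams E F q := by
  simp only [outputParams, Prod.fst_add, Prod.snd_add, Prod.smul_fst, Prod.smul_snd, mulVec_add,
    mulVec_smul, Prod.smul_mk, Prod.mk_add_mk]
  congr 1 <;> [skip; congr 1] <;> module

lemma mulVec_hSeq_add_mulVec_hSeq (p : HParams nx nu) (k : ℕ) :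
    E *ᵥ hSeq w p.1 k + F *ᵥ hSeq w p.2 k = hSeq w (outputParams E F p) k := by
  simp only [hSeq, outputParams, mulVec_add, mulVec_smul]
  module

lemma hSeq_succ_of_inD {p : HParams nx nu} (hp : inD A B w p) (k : ℕ) :
    hSeq w p.1 (k + 1) = A *ᵥ hSeq w p.1 k + B *ᵥ hSeq w p.2 k := by
  obtain ⟨he, hs, hc⟩ := hp
  simp only [hSeq, mulVec_add, mulVec_smul, Nat.cast_succ, mul_add, mul_one, Real.sin_add,
    Real.cos_add]
  linear_combination (norm := module) he + Real.sin (w * k) • hs + Real.cos (w * k) • hc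

lemma convex_inD : Convex ℝ {p : HParams nx nu | inD A B w p} := by
  rintro p ⟨hpe, hps, hpc⟩ q ⟨hqe, hqs, hqc⟩ a b - - -
  refine ⟨?_, ?_, ?_⟩ <;>
    simp only [Prod.fst_add, Prod.snd_add, Prod.smul_fst, Prod.smul_snd, mulVec_add, mulVec_smul]
  · linear_combination (norm := module) a • hpe + b • hqe
  · linear_combination (norm := module) a • hps + b • hqs
  · linear_combination (norm := module) a • hpc + b • hqc

lemma inC_iff_outputParams {p : HParams nx nu} :
    inC E F ylo yhi σ p ↔ ∀ i,
      √((outputParams E F p).2.1 i ^ 2 + (outputParams E F p).2.2 i ^ 2)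
          ≤ yhi i - σ - (outputParams E F p).1 i ∧
        √((outputParams E F p).2.1 i ^ 2 + (outputParams E F p).2.2 i ^ 2)
          ≤ (outputParams E F p).1 i - ylo i - σ :=
  Iff.rfl

lemma convex_inC : Convex ℝ {p : HParams nx nu | inC E F ylo yhi σ p} := by
  intro p hp q hq a b ha hb hab
  simp only [Set.mem_ofPred_eq, inC_iff_outputParams, outputParams_add_smul, Prod.fst_add,
    Prod.snd_add, Prod.smul_fst, Prod.smul_snd, Pi.add_apply, Pi.smul_apply, smul_eq_mul] at hp hq ⊢
  intro i
  obtain ⟨hp₁, hp₂⟩ := hp i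
  obtain ⟨hq₁, hq₂⟩ := hq i
  have hsqrt := sqrt_sq_add_sq_combo_le ha hb ((outputParams E F p).2.1 i)
    ((outputParams E F p).2.2 i) ((outputParams E F q).2.1 i) ((outputParams E F q).2.2 i)
  obtain rfl : b = 1 - a := by linarith
  constructor <;> nlinarith

lemma convex_paramSet : Convex ℝ (paramSet A B E F ylo yhi w σ) :=
  convex_inD.inter convex_inC

lemma hSeq_output_mem_Icc {p : HParams nx nu} (hp : inC E F ylo yhi σ p) (k : ℕ) (i : Fin ny) :
    hSeq w (outputParams E F p) k i ∈ Set.Icc (ylo i + σ) (yhi i - σ) := by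
  obtain ⟨h₁, h₂⟩ := inC_iff_outputParams.1 hp i
  have hosc := abs_le.mp <| abs_sin_mul_add_cos_mul_le (w * k)
    ((outputParams E F p).2.1 i) ((outputParams E F p).2.2 i)
  simp only [hSeq, Pi.add_apply, Pi.smul_apply, smul_eq_mul, Set.mem_Icc]
  constructor <;> linarith

lemma feasSol_hSeq (hσ : 0 ≤ σ) {q : HParams nx nu} (hq : q ∈ paramSet A B E F ylo yhi w σ) :
    FeasSol A B E F ylo yhi w σ N (q.1.1 + q.1.2.2) (hSeq w q.1) (hSeq w q.2) q := by
  obtain ⟨hD, hC⟩ := hq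
  refine ⟨hSeq_zero w q.1, fun k _ => hSeq_succ_of_inD hD k, fun k _ i => ?_, rfl, hD, hC⟩
  rw [mulVec_hSeq_add_mulVec_hSeq]
  obtain ⟨hlo, hhi⟩ := hSeq_output_mem_Icc hC k i
  exact ⟨by linarith, by linarith⟩

lemma Jcost_hSeq (r q : HParams nx nu) :
    Jcost Q Te Th R Se Sh w N r (hSeq w q.1) (hSeq w q.2) q = Vh Te Th Se Sh r q := by
  simp [Jcost, quadForm]

lemma Vh_le_Jcost (hQ : Q.PosSemidef) (hR : R.PosSemidef) (r q : HParams nx nu)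
    (xs : ℕ → RVec nx) (us : ℕ → RVec nu) :
    Vh Te Th Se Sh r q ≤ Jcost Q Te Th R Se Sh w N r xs us q :=
  le_add_of_nonneg_left <| Finset.sum_nonneg fun _ _ =>
    add_nonneg (quadForm_nonneg hQ _) (quadForm_nonneg hR _)

lemma feasSol_add_smul_sub {p q : HParams nx nu} (hp : p ∈ paramSet A B E F ylo yhi w σ)
    (hq : q ∈ paramSet A B E F ylo yhi w σ) {v : ℕ → RVec nu}
    (hv : zeroStateResponse A B N v = hSeq w (q - p).1 N) {t : ℝ} (ht₀ : 0 ≤ t) (ht₁ : t ≤ 1)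
    (hsmall : ∀ k < N, ∀ i, |t * (E *ᵥ zeroStateResponse A B k v + F *ᵥ v k) i| ≤ σ) :
    FeasSol A B E F ylo yhi w σ N (p.1.1 + p.1.2.2)
      (fun k => hSeq w p.1 k + t • zeroStateResponse A B k v) (fun k => hSeq w p.2 k + t • v k)
      (p + t • (q - p)) := by
  obtain ⟨hD, hC⟩ := convex_paramSet.add_smul_sub_mem hp hq ⟨ht₀, ht₁⟩
  refine ⟨by simp, fun k _ => ?_, fun k hk i => ?_, ?_, hD, hC⟩
  · simp only
    rw [hSeq_succ_of_inD hp.1, zeroStateResponse_succ]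
    simp only [mulVec_add, mulVec_smul]
    module
  · have hy : (E *ᵥ (hSeq w p.1 k + t • zeroStateResponse A B k v) + F *ᵥ (hSeq w p.2 k + t • v k)) i
        = hSeq w (outputParams E F p) k i
          + t * (E *ᵥ zeroStateResponse A B k v + F *ᵥ v k) i := by
      rw [← mulVec_hSeq_add_mulVec_hSeq]
      simp only [mulVec_add, mulVec_smul, Pi.add_apply, Pi.smul_apply, smul_eq_mul]
      ring
    obtain ⟨hlo, hhi⟩ := hSeq_output_mem_Icc (w := w) hp.2 k i
    obtain ⟨hlo', hhi'⟩ := abs_le.mp (hsmall k hk i)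
    rw [hy]
    exact ⟨by linarith, by linarith⟩
  · simp only [Prod.fst_add, Prod.smul_fst, hSeq_add, hSeq_smul, hv]

lemma Jcost_add_smul_sub (r p q : HParams nx nu) (e : ℕ → RVec nx) (v : ℕ → RVec nu) (t : ℝ) :
    Jcost Q Te Th R Se Sh w N r (fun k => hSeq w p.1 k + t • e k) (fun k => hSeq w p.2 k + t • v k)
        (p + t • (q - p))
      = t ^ 2 * ∑ k ∈ Finset.range N,
          (quadForm Q (e k - hSeq w (q - p).1 k) + quadForm R (v k - hSeq w (q - p).2 k))
        + Vh Te Th Se Sh r (p + t • (q - p)) := by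
  rw [Jcost, Finset.mul_sum]
  congr 1
  refine Finset.sum_congr rfl fun k _ => ?_
  simp only [Prod.fst_add, Prod.snd_add, Prod.smul_fst, Prod.smul_snd, hSeq_add, hSeq_smul,
    add_sub_add_left_eq_sub, ← smul_sub, quadForm_smul]
  ring

lemma Vh_le_of_forall_Vh_le_Jcost (hσ : 0 < σ) (hTe : Te.PosSemidef) (hTh : Th.PosSemidef)
    (hSe : Se.PosSemidef) (hSh : Sh.PosSemidef) {ν : ℕ} (hν : ν ≤ N)
    (hrank : (ctrbMat A B ν).rank = nx) {r p q : HParams nx nu}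
    (hp : p ∈ paramSet A B E F ylo yhi w σ) (hq : q ∈ paramSet A B E F ylo yhi w σ)
    (hmin : ∀ xs us p', FeasSol A B E F ylo yhi w σ N (p.1.1 + p.1.2.2) xs us p' →
      Vh Te Th Se Sh r p ≤ Jcost Q Te Th R Se Sh w N r xs us p') :
    Vh Te Th Se Sh r p ≤ Vh Te Th Se Sh r q := by
  by_contra! hlt
  obtain ⟨v, hv⟩ : hSeq w (q - p).1 N ∈ LinearMap.range (zeroStateResponse A B N) := by
    rw [range_zeroStateResponse_eq_top A B hν hrank]
    trivial
  set K := ∑ k ∈ Finset.range N, (quadForm Q (zeroStateResponse A B k v - hSeq w (q - p).1 k)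
    + quadForm R (v k - hSeq w (q - p).2 k))
  have hsmall : ∀ᶠ t in 𝓝 (0 : ℝ), ∀ k < N, ∀ i,
      |t * (E *ᵥ zeroStateResponse A B k v + F *ᵥ v k) i| ≤ σ := by
    refine (eventually_all_finite (Set.finite_Iio N)).2 fun k _ => eventually_all.2 fun i => ?_
    refine (ContinuousAt.eventually_lt (by fun_prop) continuousAt_const ?_).mono fun _ h => h.le
    simpa using hσ
  have hdecr : ∀ᶠ t in 𝓝 (0 : ℝ), t * K < Vh Te Th Se Sh r p - Vh Te Th Se Sh r q :=
    ContinuousAt.eventually_lt (by fun_prop) continuousAt_const (by simpa using hlt)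
  have hle1 : ∀ᶠ t in 𝓝 (0 : ℝ), t ≤ 1 := Iic_mem_nhds one_pos
  have hpos : ∀ᶠ t in 𝓝[>] (0 : ℝ), 0 < t := self_mem_nhdsWithin
  obtain ⟨t, ht₀, ht₁, hs, hd⟩ :=
    (hpos.and <| nhdsWithin_le_nhds <| hle1.and (hsmall.and hdecr)).exists
  have hJ := hmin _ _ _ (feasSol_add_smul_sub hp hq hv ht₀.le ht₁ hs)
  rw [Jcost_add_smul_sub] at hJ
  have hconv : Vh Te Th Se Sh r (p + t • (q - p))
      ≤ (1 - t) * Vh Te Th Se Sh r p + t * Vh Te Th Se Sh r q := by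
    rw [show p + t • (q - p) = (1 - t) • p + t • q by module]
    exact (convexOn_Vh hTe hTh hSe hSh r).2 trivial trivial (by linarith) ht₀.le (by ring)
  nlinarith [mul_lt_mul_of_pos_left hd ht₀]

end HMPC

lemma IsUniqueMinOn.eq_of_le {α : Type*} {f : α → ℝ} {S : Set α} {a b : α}
    (ha : IsUniqueMinOn f S a) (hb : b ∈ S) (hle : f b ≤ f a) : b = a := by
  by_contra hne
  exact (ha.2 b hb hne).not_ge hle

theorem statement12_general {nx nu ny : ℕ}
    (A : Matrix (Fin nx) (Fin nx) ℝ) (B : Matrix (Fin nx) (Fin nu) ℝ)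
    (E : Matrix (Fin ny) (Fin nx) ℝ) (F : Matrix (Fin ny) (Fin nu) ℝ)
    (ylo yhi : RVec ny)
    (w σ : ℝ) (hσ : 0 < σ) (N : ℕ)
    (Q Te Th : Matrix (Fin nx) (Fin nx) ℝ) (R Se Sh : Matrix (Fin nu) (Fin nu) ℝ)
    (hQ : Q.PosDef) (hR : R.PosDef) (hTe : Te.PosDef) (hSe : Se.PosDef)
    (hTh : Th.PosDef) (hSh : Sh.PosDef)
    (hNidx : ∃ ν ≤ N, (ctrbMat A B ν).rank = nx)
    (r : HParams nx nu)
    (x : RVec nx)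
    (xs : ℕ → RVec nx) (us : ℕ → RVec nu) (p : HParams nx nu)
    (hopt : OptSol A B E F ylo yhi Q Te Th R Se Sh w σ N r x xs us p)
    (rmin : HParams nx nu)
    (hrmin : IsUniqueMinOn (Vh Te Th Se Sh r) (paramSet A B E F ylo yhi w σ) rmin) :
    x = p.1.1 + p.1.2.2 ↔ x = rmin.1.1 + rmin.1.2.2 := by
  obtain ⟨hfeas, hJmin⟩ := hopt
  obtain ⟨ν, hν, hrank⟩ := hNidx
  have hp : p ∈ paramSet A B E F ylo yhi w σ := ⟨hfeas.2.2.2.2.1, hfeas.2.2.2.2.2⟩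
  have hVh_le : ∀ xs' us' p', FeasSol A B E F ylo yhi w σ N x xs' us' p' →
      Vh Te Th Se Sh r p ≤ Jcost Q Te Th R Se Sh w N r xs' us' p' := fun xs' us' p' h =>
    (Vh_le_Jcost hQ.posSemidef hR.posSemidef r p xs us).trans (hJmin xs' us' p' h)
  constructor
  · rintro rfl
    rw [hrmin.eq_of_le hp <| Vh_le_of_forall_Vh_le_Jcost hσ hTe.posSemidef hTh.posSemidef
      hSe.posSemidef hSh.posSemidef hν hrank hp hrmin.1 hVh_le]
  · rintro rfl
    have hharm := hVh_le _ _ _ (feasSol_hSeq hσ.le hrmin.1)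
    rw [Jcost_hSeq] at hharm
    rw [hrmin.eq_of_le hp hharm]

/-- under controllability and `N` at least the controllability index, for any
optimal HMPC solution at a feasible state `x`, `x = x̂_e* + x̂_c*` iff `x = x̊_e + x̊_c`, where
`(x̊, ů)` is the unique minimizer of `V_h` over `D ∩ C_σ`. -/
theorem statement12 {nx nu ny : ℕ}
    (A : Matrix (Fin nx) (Fin nx) ℝ) (B : Matrix (Fin nx) (Fin nu) ℝ)
    (E : Matrix (Fin ny) (Fin nx) ℝ) (F : Matrix (Fin ny) (Fin nu) ℝ)
    (ylo yhi : RVec ny) (hy : ∀ i, ylo i < yhi i)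
    (w σ : ℝ) (hw : 0 < w) (hσ : 0 < σ) (N : ℕ) (hN : 1 ≤ N)
    (Q Te Th : Matrix (Fin nx) (Fin nx) ℝ) (R Se Sh : Matrix (Fin nu) (Fin nu) ℝ)
    (hQ : Q.PosDef) (hR : R.PosDef) (hTe : Te.PosDef) (hSe : Se.PosDef)
    (hTh : Th.PosDef) (hThd : Th.IsDiag) (hSh : Sh.PosDef) (hShd : Sh.IsDiag)
    (hctrl : (ctrbMat A B nx).rank = nx)
    (hNidx : ∃ ν ≤ N, (ctrbMat A B ν).rank = nx)
    (hne : (paramSet A B E F ylo yhi w σ).Nonempty)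
    (r : HParams nx nu)
    (x : RVec nx) (hx : Feasible A B E F ylo yhi w σ N x)
    (xs : ℕ → RVec nx) (us : ℕ → RVec nu) (p : HParams nx nu)
    (hopt : OptSol A B E F ylo yhi Q Te Th R Se Sh w σ N r x xs us p)
    (rmin : HParams nx nu)
    (hrmin : IsUniqueMinOn (Vh Te Th Se Sh r) (paramSet A B E F ylo yhi w σ) rmin) :
    x = p.1.1 + p.1.2.2 ↔ x = rmin.1.1 + rmin.1.2.2 :=
  statement12_general A B E F ylo yhi w σ hσ N Q Te Th R Se Sh hQ hR hTe hSe hTh hSh hNidx r x xs us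
    p hopt rmin hrmin
end
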